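/- For every A ≥ 1 and every (x1, x3, x5) ∈ [1, A]³, there exists one and only one triple (x2, x4, x6) ∈ (1/2, A]³ satisfying the system (E): x1 = 2·x2·x4 − (1/2)·(x2/x4 + x4/x2), x3 = 2·x4·x6 − (1/2)·(x4/x6 + x6/x4), x5 = 2·x2·x6 − (1/2)·(x2/x6 + x6/x2). -/

import Mathlib

/-!
In the reciprocal coordinates `u = 1/x2`, `v = 1/x4`, `w = 1/x6` each equation of (E) becomes
`u² + v² + 2xuv = 4`, and on the positive quadrant the left-hand side is strictly increasing in
both variables. Existence: for `u = α ∈ (0, 2)` solve the first and third equations for `v` and `w`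
and apply the intermediate value theorem to the second one in `α`. Uniqueness: if `u < u'` then
`v' < v` and `w' < w`, which is incompatible with the equation linking `v` and `w`.
For the bounds, `x2 > 1/2` is `u < 2`, and `x2 ≤ A` holds because `u < 1/A ≤ 1/x1, 1/x5` would
force `v, w > 1`, while `v, w > 1` and `x3 ≥ 1` give `v² + w² + 2x3vw > 4`.
-/

open Set

noncomputable section

def edgeForm (x u v : ℝ) : ℝ := u ^ 2 + v ^ 2 + 2 * x * u * v

def SolvesEdgeSystem (x₁ x₃ x₅ u v w : ℝ) : Prop :=
  edgeForm x₁ u v = 4 ∧ edgeForm x₃ v w = 4 ∧ edgeForm x₅ u w = 4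

theorem edgeForm_comm (x u v : ℝ) : edgeForm x u v = edgeForm x v u := by
  unfold edgeForm; ring

theorem edge_eq_iff_edgeForm {x a b : ℝ} (ha : 0 < a) (hb : 0 < b) :
    x = 2 * a * b - (1/2) * (a / b + b / a) ↔ edgeForm x a⁻¹ b⁻¹ = 4 := by
  unfold edgeForm
  constructor
  · rintro rfl
    field_simp
    ring
  · intro h
    field_simp at h ⊢
    linear_combination h

theorem edgeForm_lt_edgeForm {x u v u' v' : ℝ} (hx : 0 ≤ x) (hu : 0 ≤ u) (hv : 0 ≤ v)
    (huu : u < u') (hvv : v ≤ v') : edgeForm x u v < edgeForm x u' v' := by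
  unfold edgeForm
  have huv : u * v ≤ u' * v' := mul_le_mul huu.le hvv hv (hu.trans huu.le)
  nlinarith [mul_le_mul_of_nonneg_left huv hx]

theorem lt_of_edgeForm_eq {x u v u' v' : ℝ} (hx : 0 ≤ x) (hu : 0 ≤ u) (hv : 0 ≤ v)
    (huu : u < u') (h : edgeForm x u v = edgeForm x u' v') : v' < v := by
  by_contra! hvv
  exact (edgeForm_lt_edgeForm hx hu hv huu hvv).ne h

theorem eq_of_edgeForm_eq {x u v v' : ℝ} (hx : 0 ≤ x) (hu : 0 ≤ u) (hv : 0 ≤ v) (hv' : 0 ≤ v')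
    (h : edgeForm x u v = edgeForm x u v') : v = v' := by
  rw [edgeForm_comm x u v, edgeForm_comm x u v'] at h
  rcases lt_trichotomy v v' with hlt | heq | hgt
  · exact absurd h (edgeForm_lt_edgeForm hx hv hu hlt le_rfl).ne
  · exact heq
  · exact absurd h (edgeForm_lt_edgeForm hx hv' hu hgt le_rfl).ne'

theorem lt_two_of_edgeForm_eq {x u v : ℝ} (hx : 0 ≤ x) (hu : 0 < u) (hv : 0 ≤ v)
    (h : edgeForm x u v = 4) : v < 2 := by
  unfold edgeForm at h
  nlinarith [mul_nonneg (mul_nonneg hx hu.le) hv]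

theorem one_lt_of_edgeForm_eq {x u v : ℝ} (hx : 1 ≤ x) (hu : 0 ≤ u) (hv : 0 ≤ v)
    (hxu : x * u < 1) (h : edgeForm x u v = 4) : 1 < v := by
  unfold edgeForm at h
  by_contra! hv1
  have hu1 : u < 1 := by nlinarith
  nlinarith [mul_le_mul_of_nonneg_left hv1 (by positivity : 0 ≤ x * u)]

theorem four_lt_edgeForm {x u v : ℝ} (hx : 1 ≤ x) (hu : 1 < u) (hv : 1 < v) :
    4 < edgeForm x u v := by
  unfold edgeForm
  nlinarith [mul_le_mul_of_nonneg_right hx (by positivity : 0 ≤ u * v), one_lt_mul hu.le hv]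

namespace SolvesEdgeSystem

variable {x₁ x₃ x₅ u v w : ℝ}

theorem rotate (h : SolvesEdgeSystem x₁ x₃ x₅ u v w) : SolvesEdgeSystem x₃ x₅ x₁ v w u := by
  obtain ⟨h₁, h₃, h₅⟩ := h
  exact ⟨h₃, edgeForm_comm x₅ u w ▸ h₅, edgeForm_comm x₁ u v ▸ h₁⟩

theorem reflect (h : SolvesEdgeSystem x₁ x₃ x₅ u v w) : SolvesEdgeSystem x₅ x₃ x₁ u w v := by
  obtain ⟨h₁, h₃, h₅⟩ := h
  exact ⟨h₅, edgeForm_comm x₃ v w ▸ h₃, h₁⟩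

theorem le_of_solvesEdgeSystem {u' v' w' : ℝ} (hx₁ : 0 ≤ x₁) (hx₃ : 0 ≤ x₃) (hx₅ : 0 ≤ x₅)
    (hu : 0 ≤ u) (hv : 0 ≤ v) (hw : 0 ≤ w) (hv' : 0 ≤ v') (hw' : 0 ≤ w') (h : SolvesEdgeSystem x₁ x₃ x₅ u v w)
    (h' : SolvesEdgeSystem x₁ x₃ x₅ u' v' w') : u' ≤ u := by
  by_contra! huu
  have hvv : v' < v := lt_of_edgeForm_eq hx₁ hu hv huu (h.1.trans h'.1.symm)
  have hww : w' < w := lt_of_edgeForm_eq hx₅ hu hw huu (h.2.2.trans h'.2.2.symm)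
  exact (edgeForm_lt_edgeForm hx₃ hv' hw' hvv hww.le).ne (h'.2.1.trans h.2.1.symm)

theorem unique {u' v' w' : ℝ} (hx₁ : 0 ≤ x₁) (hx₃ : 0 ≤ x₃) (hx₅ : 0 ≤ x₅)
    (hu : 0 ≤ u) (hv : 0 ≤ v) (hw : 0 ≤ w) (hu' : 0 ≤ u') (hv' : 0 ≤ v') (hw' : 0 ≤ w')
    (h : SolvesEdgeSystem x₁ x₃ x₅ u v w) (h' : SolvesEdgeSystem x₁ x₃ x₅ u' v' w') :
    u' = u ∧ v' = v ∧ w' = w := by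
  obtain rfl : u' = u :=
    (le_of_solvesEdgeSystem hx₁ hx₃ hx₅ hu hv hw hv' hw' h h').antisymm
      (le_of_solvesEdgeSystem hx₁ hx₃ hx₅ hu' hv' hw' hv hw h' h)
  exact ⟨rfl, eq_of_edgeForm_eq hx₁ hu hv' hv (h'.1.trans h.1.symm),
    eq_of_edgeForm_eq hx₅ hu hw' hw (h'.2.2.trans h.2.2.symm)⟩

theorem one_le_mul {A : ℝ} (hx₁ : 1 ≤ x₁) (hx₃ : 1 ≤ x₃) (hx₅ : 1 ≤ x₅)
    (hx₁A : x₁ ≤ A) (hx₅A : x₅ ≤ A) (hu : 0 < u) (hv : 0 ≤ v) (hw : 0 ≤ w)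
    (h : SolvesEdgeSystem x₁ x₃ x₅ u v w) : 1 ≤ u * A := by
  by_contra! huA
  have hv1 : 1 < v := one_lt_of_edgeForm_eq hx₁ hu.le hv (by nlinarith) h.1
  have hw1 : 1 < w := one_lt_of_edgeForm_eq hx₅ hu.le hw (by nlinarith) h.2.2
  exact (four_lt_edgeForm hx₃ hv1 hw1).ne' h.2.1

end SolvesEdgeSystem

/-- The positive root `v` of `edgeForm x α v = 4`. -/
def edgeRoot (x α : ℝ) : ℝ := √((x ^ 2 - 1) * α ^ 2 + 4) - x * α

theorem continuous_edgeRoot (x : ℝ) : Continuous (edgeRoot x) := by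
  unfold edgeRoot
  fun_prop

theorem edgeRoot_zero (x : ℝ) : edgeRoot x 0 = 2 := by
  norm_num [edgeRoot, show (4 : ℝ) = 2 ^ 2 by norm_num]

theorem edgeRoot_two {x : ℝ} (hx : 0 ≤ x) : edgeRoot x 2 = 0 := by
  rw [edgeRoot, show (x ^ 2 - 1) * 2 ^ 2 + 4 = (2 * x) ^ 2 by ring, Real.sqrt_sq (by positivity)]
  ring

theorem edgeForm_edgeRoot {x α : ℝ} (h0 : 0 ≤ α) (h2 : α ≤ 2) :
    edgeForm x α (edgeRoot x α) = 4 := by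
  have hM : 0 ≤ (x ^ 2 - 1) * α ^ 2 + 4 := by nlinarith [sq_nonneg (x * α)]
  unfold edgeForm edgeRoot
  nlinarith [Real.sq_sqrt hM]

theorem edgeRoot_pos {x α : ℝ} (h0 : 0 ≤ α) (h2 : α < 2) : 0 < edgeRoot x α := by
  have hlt : x * α < √((x ^ 2 - 1) * α ^ 2 + 4) :=
    Real.lt_sqrt_of_sq_lt (by nlinarith)
  unfold edgeRoot
  linarith

theorem exists_solvesEdgeSystem {x₁ x₃ x₅ : ℝ} (hx₁ : 0 ≤ x₁) (hx₃ : 0 ≤ x₃) (hx₅ : 0 ≤ x₅) :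
    ∃ u v w : ℝ, 0 < u ∧ 0 < v ∧ 0 < w ∧ u < 2 ∧ SolvesEdgeSystem x₁ x₃ x₅ u v w := by
  set f : ℝ → ℝ := fun α ↦ edgeForm x₃ (edgeRoot x₁ α) (edgeRoot x₅ α)
  have hf : ContinuousOn f (Icc 0 2) := by
    have := continuous_edgeRoot x₁
    have := continuous_edgeRoot x₅
    unfold f edgeForm
    fun_prop
  have h4 : (4 : ℝ) ∈ Ioo (f 2) (f 0) := by
    simp only [f, edgeForm, edgeRoot_zero, edgeRoot_two hx₁, edgeRoot_two hx₅, mem_Ioo]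
    constructor <;> nlinarith
  obtain ⟨α, ⟨hα0, hα2⟩, hfα⟩ := intermediate_value_Ioo' zero_le_two hf h4
  exact ⟨α, _, _, hα0, edgeRoot_pos hα0.le hα2, edgeRoot_pos hα0.le hα2, hα2,
    edgeForm_edgeRoot hα0.le hα2.le, hfα, edgeForm_edgeRoot hα0.le hα2.le⟩

theorem inv_mem_Ioc {u A : ℝ} (hu : 0 < u) (hu2 : u < 2) (huA : 1 ≤ u * A) :
    1/2 < u⁻¹ ∧ u⁻¹ ≤ A :=
  ⟨by rwa [one_div, inv_lt_inv₀ two_pos hu], (inv_le_iff_one_le_mul₀' hu).2 huA⟩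

theorem stmt_5 (A x1 x3 x5 : ℝ)
    (h1 : 1 ≤ x1 ∧ x1 ≤ A) (h3 : 1 ≤ x3 ∧ x3 ≤ A) (h5 : 1 ≤ x5 ∧ x5 ≤ A) :
    ∃! p : ℝ × ℝ × ℝ,
      (1/2 < p.1 ∧ p.1 ≤ A) ∧ (1/2 < p.2.1 ∧ p.2.1 ≤ A) ∧ (1/2 < p.2.2 ∧ p.2.2 ≤ A) ∧
      x1 = 2 * p.1 * p.2.1 - (1/2) * (p.1 / p.2.1 + p.2.1 / p.1) ∧
      x3 = 2 * p.2.1 * p.2.2 - (1/2) * (p.2.1 / p.2.2 + p.2.2 / p.2.1) ∧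
      x5 = 2 * p.1 * p.2.2 - (1/2) * (p.1 / p.2.2 + p.2.2 / p.1) := by
  obtain ⟨hx₁, hx₁A⟩ := h1
  obtain ⟨hx₃, hx₃A⟩ := h3
  obtain ⟨hx₅, hx₅A⟩ := h5
  obtain ⟨u, v, w, hu, hv, hw, hu2, hsol⟩ :=
    exists_solvesEdgeSystem (zero_le_one.trans hx₁) (zero_le_one.trans hx₃) (zero_le_one.trans hx₅)
  have hv2 : v < 2 := lt_two_of_edgeForm_eq (by linarith) hu hv.le hsol.1
  have hw2 : w < 2 := lt_two_of_edgeForm_eq (by linarith) hu hw.le hsol.2.2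
  have huA := hsol.one_le_mul hx₁ hx₃ hx₅ hx₁A hx₅A hu hv.le hw.le
  have hvA := hsol.rotate.one_le_mul hx₃ hx₅ hx₁ hx₃A hx₁A hv hw.le hu.le
  have hwA := hsol.reflect.rotate.one_le_mul hx₃ hx₁ hx₅ hx₃A hx₅A hw hv.le hu.le
  refine ⟨(u⁻¹, v⁻¹, w⁻¹), ⟨inv_mem_Ioc hu hu2 huA, inv_mem_Ioc hv hv2 hvA,
    inv_mem_Ioc hw hw2 hwA, ?_⟩, ?_⟩
  · simp only [edge_eq_iff_edgeForm, inv_pos, inv_inv, hu, hv, hw]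
    exact hsol
  rintro ⟨a, b, c⟩ ⟨⟨ha, -⟩, ⟨hb, -⟩, ⟨hc, -⟩, e₁, e₃, e₅⟩
  have ha0 : 0 < a := by linarith
  have hb0 : 0 < b := by linarith
  have hc0 : 0 < c := by linarith
  rw [edge_eq_iff_edgeForm ha0 hb0] at e₁
  rw [edge_eq_iff_edgeForm hb0 hc0] at e₃
  rw [edge_eq_iff_edgeForm ha0 hc0] at e₅
  obtain ⟨rfl, rfl, rfl⟩ := SolvesEdgeSystem.unique (by linarith) (by linarith) (by linarith)
    hu.le hv.le hw.le (inv_nonneg.2 ha0.le) (inv_nonneg.2 hb0.le) (inv_nonneg.2 hc0.le)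
    hsol ⟨e₁, e₃, e₅⟩
  simp
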